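/- Let U ⊆ ℝⁿ be open and let 𝓛 : U × Matrix(n×k, ℝ) → ℝ be C², written 𝓛(x, p), satisfying for each fixed x the fundamental equations in the entries of p: ∂²𝓛/∂p_A^K∂p_B^L + ∂²𝓛/∂p_B^K∂p_A^L = 0 for all A, B ∈ {1,…,n} and K, L ∈ {1,…,k}. Then for every C² map f : U → ℝ^k, every K and every x ∈ U, Σ_{A=1}^{n} ∂/∂x^A [ (∂𝓛/∂p_A^K)(x, Df(x)) ] = Σ_{A=1}^{n} (∂²𝓛/∂x^A∂p_A^K)(x, Df(x)), where Df(x) is the n×k matrix ((∂f^K/∂x^A)(x)); in particular the left-hand side involves no second derivatives of f. -/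

import Mathlib

/-! By the chain rule, `∂/∂x^A [∂𝓛/∂p_A^K (x, Df(x))]` is the explicit `x^A`-derivative plus
`Σ_{B,C} ∂²f^C/∂x^A∂x^B · ∂²𝓛/∂p_B^C∂p_A^K`. After summing over `A`, this extra term pairs the
Hessian of `f^C`, symmetric in `(A, B)`, with `∂²𝓛/∂p_B^C∂p_A^K`, which the fundamental equations
make antisymmetric in `(A, B)`; hence it vanishes. -/

open MeasureTheory
open scoped BigOperators

noncomputable section

/-- Product of matrices given as functions (entry `(i,k)` is `∑ j, M i j * N j k`). -/
def mmul {a b c : ℕ} (M : Fin a → Fin b → ℝ) (N : Fin b → Fin c → ℝ) :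
    Fin a → Fin c → ℝ :=
  fun i k => ∑ j, M i j * N j k

/-- Determinant of a square matrix given as a function. -/
def fdet {a : ℕ} (M : Fin a → Fin a → ℝ) : ℝ :=
  Matrix.det (Matrix.of M)

/-- Partial derivative of a function of a matrix with respect to the `(i,j)` entry. -/
def pdM {a b : ℕ} (L : (Fin a → Fin b → ℝ) → ℝ) (i : Fin a) (j : Fin b)
    (m : Fin a → Fin b → ℝ) : ℝ :=
  deriv (fun t : ℝ => L (fun i' j' => m i' j' + (if i' = i ∧ j' = j then t else 0))) 0

/-- Partial derivative of a function of a vector with respect to the `i`-th coordinate. -/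
def pdV {a : ℕ} (f : (Fin a → ℝ) → ℝ) (i : Fin a) (x : Fin a → ℝ) : ℝ :=
  deriv (fun t : ℝ => f (fun i' => x i' + (if i' = i then t else 0))) 0

/-- The fundamental equations for a function of an `a × b` matrix:
for all rows `i₁, i₂` and columns `j₁, j₂`,
`∂²L/∂m_{i₁}^{j₁}∂m_{i₂}^{j₂} + ∂²L/∂m_{i₂}^{j₁}∂m_{i₁}^{j₂} = 0`. -/
def FundEqs {a b : ℕ} (L : (Fin a → Fin b → ℝ) → ℝ) : Prop :=
  ∀ (i₁ i₂ : Fin a) (j₁ j₂ : Fin b) (m : Fin a → Fin b → ℝ),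
    pdM (fun m' => pdM L i₂ j₂ m') i₁ j₁ m + pdM (fun m' => pdM L i₁ j₂ m') i₂ j₁ m = 0

/-- The velocity matrix of a path `γ`: `(vel γ t) F A = ∂γ^A/∂t^F (t)`. -/
def vel {r n : ℕ} (γ : (Fin r → ℝ) → (Fin n → ℝ)) (t : Fin r → ℝ) :
    Fin r → Fin n → ℝ :=
  fun F A => pdV (fun s => γ s A) F t

/-- The matrix of gradients of a copath `f`: `(grad f x) A K = ∂f^K/∂x^A (x)`. -/
def grad {n k : ℕ} (f : (Fin n → ℝ) → (Fin k → ℝ)) (x : Fin n → ℝ) :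
    Fin n → Fin k → ℝ :=
  fun A K => pdV (fun y => f y K) A x

/-- An even `r`-form on an open set `U ⊆ ℝⁿ`: a smooth function `L(x, ẋ)` of a point
`x` and an `r × n` matrix `ẋ` which is covariant (`L(x, h·ẋ) = det h · L(x, ẋ)` for
invertible `h`) and satisfies the fundamental equations in the entries of `ẋ`. -/
def IsEvenForm {n r : ℕ} (U : Set (Fin n → ℝ))
    (L : (Fin n → ℝ) → (Fin r → Fin n → ℝ) → ℝ) : Prop :=
  ContDiffOn ℝ (⊤ : ℕ∞)
      (fun q : (Fin n → ℝ) × (Fin r → Fin n → ℝ) => L q.1 q.2)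
      (U ×ˢ (Set.univ : Set (Fin r → Fin n → ℝ))) ∧
  (∀ x ∈ U, ∀ (xdot : Fin r → Fin n → ℝ) (h : Fin r → Fin r → ℝ), fdet h ≠ 0 →
    L x (mmul h xdot) = fdet h * L x xdot) ∧
  (∀ x ∈ U, FundEqs (L x))

/-- The differential of a Lagrangian of paths `L(x, ẋ)`:
`ΔL(x, (ẋ; ẏ)) = (−1)^r Σ_A ẏ^A (∂L/∂x^A − Σ_{F,B} ẋ_F^B ∂²L/∂x^B∂ẋ_F^A)`,
where `ẋ` consists of the first `r` rows and `ẏ` is the last row of the argument. -/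
def Dform {n r : ℕ} (L : (Fin n → ℝ) → (Fin r → Fin n → ℝ) → ℝ) :
    (Fin n → ℝ) → (Fin (r + 1) → Fin n → ℝ) → ℝ :=
  fun x M => (-1 : ℝ) ^ r * ∑ A, M (Fin.last r) A *
    (pdV (fun x' => L x' (fun F => M (Fin.castSucc F))) A x
      - ∑ F, ∑ B, M (Fin.castSucc F) B *
          pdV (fun x' => pdM (L x') F A (fun G => M (Fin.castSucc G))) B x)

/-- An even mixed form of codegree `k` and additional degree `r` on an open set
`U ⊆ ℝⁿ`: a smooth function `𝓛(x, p, w)` which is right-covariant, left-covariant,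
admissible, and satisfies the fundamental equations in the entries of the stacked
`(n+r) × k` matrix (`p` over `w`). -/
def IsMixedForm {n k r : ℕ} (U : Set (Fin n → ℝ))
    (L : (Fin n → ℝ) → (Fin n → Fin k → ℝ) → (Fin r → Fin k → ℝ) → ℝ) : Prop :=
  ContDiffOn ℝ (⊤ : ℕ∞)
      (fun q : (Fin n → ℝ) × (Fin n → Fin k → ℝ) × (Fin r → Fin k → ℝ) =>
        L q.1 q.2.1 q.2.2)
      (U ×ˢ (Set.univ : Set ((Fin n → Fin k → ℝ) × (Fin r → Fin k → ℝ)))) ∧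
  (∀ x ∈ U, ∀ (p : Fin n → Fin k → ℝ) (w : Fin r → Fin k → ℝ) (g : Fin k → Fin k → ℝ),
    fdet g ≠ 0 → L x (mmul p g) (mmul w g) = fdet g * L x p w) ∧
  (∀ x ∈ U, ∀ (p : Fin n → Fin k → ℝ) (w : Fin r → Fin k → ℝ) (h : Fin r → Fin r → ℝ),
    fdet h ≠ 0 → L x p (mmul h w) = fdet h * L x p w) ∧
  (∀ x ∈ U, ∀ (p : Fin n → Fin k → ℝ) (w : Fin r → Fin k → ℝ) (a : Fin n → Fin r → ℝ),
    L x (p + mmul a w) w = L x p w) ∧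
  (∀ x ∈ U, FundEqs (fun m : Fin (n + r) → Fin k → ℝ =>
    L x (fun A => m (Fin.castAdd r A)) (fun F => m (Fin.natAdd n F))))

/-- The differential of a mixed Lagrangian `𝓛(x, p, w)`:
`Δ𝓛(x, p, ŵ) = (−1)^r Σ_{K,A} w'^K ∂²𝓛/∂x^A∂p_A^K (x, p, w)`, where `ŵ` has first
`r` rows `w` and last row `w'`. -/
def Dmix {n k r : ℕ}
    (L : (Fin n → ℝ) → (Fin n → Fin k → ℝ) → (Fin r → Fin k → ℝ) → ℝ) :
    (Fin n → ℝ) → (Fin n → Fin k → ℝ) → (Fin (r + 1) → Fin k → ℝ) → ℝ :=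
  fun x p what => (-1 : ℝ) ^ r * ∑ K, ∑ A, what (Fin.last r) K *
    pdV (fun x' => pdM (fun p' => L x' p' (fun F => what (Fin.castSucc F))) A K p) A x

/-- An even dual form of codegree `k` on an open set `U ⊆ ℝⁿ`: a smooth function
`𝓛(x, p)` of a point `x` and an `n × k` matrix `p` of momenta which is covariant
(`𝓛(x, p·g) = det g · 𝓛(x, p)` for invertible `g`) and satisfies the fundamental
equations in the entries of `p`. -/
def IsDualForm {n k : ℕ} (U : Set (Fin n → ℝ))
    (L : (Fin n → ℝ) → (Fin n → Fin k → ℝ) → ℝ) : Prop :=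
  ContDiffOn ℝ (⊤ : ℕ∞)
      (fun q : (Fin n → ℝ) × (Fin n → Fin k → ℝ) => L q.1 q.2)
      (U ×ˢ (Set.univ : Set (Fin n → Fin k → ℝ))) ∧
  (∀ x ∈ U, ∀ (p : Fin n → Fin k → ℝ) (g : Fin k → Fin k → ℝ), fdet g ≠ 0 →
    L x (mmul p g) = fdet g * L x p) ∧
  (∀ x ∈ U, FundEqs (L x))

/-- The identity matrix as a function. -/
def idm (n : ℕ) : Fin n → Fin n → ℝ := fun i j => if i = j then 1 else 0

open scoped Topology

section LineDeriv

variable {E M F : Type*} [NormedAddCommGroup E] [NormedSpace ℝ E]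
  [NormedAddCommGroup M] [NormedSpace ℝ M] [NormedAddCommGroup F] [NormedSpace ℝ F]

lemma lineDeriv_comp_prodMk_left (Φ : E × M → F) (x : E) (m v : M) :
    lineDeriv ℝ (fun m' => Φ (x, m')) m v = lineDeriv ℝ Φ (x, m) (0, v) := by
  unfold lineDeriv
  congr! 3 with t
  ext <;> simp

lemma lineDeriv_comp_prodMk_right (Φ : E × M → F) (x v : E) (m : M) :
    lineDeriv ℝ (fun x' => Φ (x', m)) x v = lineDeriv ℝ Φ (x, m) (v, 0) := by
  unfold lineDeriv
  congr! 3 with t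
  ext <;> simp

lemma lineDeriv_comp_graph {G : E × M → F} {g : E → M} {x : E}
    (hG : DifferentiableAt ℝ G (x, g x)) (hg : DifferentiableAt ℝ g x) (v : E) :
    lineDeriv ℝ (fun y => G (y, g y)) x v
      = lineDeriv ℝ (fun y => G (y, g x)) x v
        + lineDeriv ℝ (fun m => G (x, m)) (g x) (lineDeriv ℝ g x v) := by
  have hchain : HasFDerivAt (fun y => G (y, g y))
      ((fderiv ℝ G (x, g x)).comp ((ContinuousLinearMap.id ℝ E).prod (fderiv ℝ g x))) x :=
    hG.hasFDerivAt.comp x ((hasFDerivAt_id x).prodMk hg.hasFDerivAt)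
  rw [(hchain.hasLineDerivAt v).lineDeriv, lineDeriv_comp_prodMk_left, lineDeriv_comp_prodMk_right,
    hG.lineDeriv_eq_fderiv, hG.lineDeriv_eq_fderiv, hg.lineDeriv_eq_fderiv, ← map_add]
  simp

lemma ContDiffAt.lineDeriv_eventuallyEq_fderiv {g : E → F} {x : E} (hg : ContDiffAt ℝ 2 g x)
    (v : E) : (fun y => lineDeriv ℝ g y v) =ᶠ[𝓝 x] fun y => fderiv ℝ g y v := by
  filter_upwards [hg.eventually (by simp)] with y hy
  exact (hy.differentiableAt two_ne_zero).lineDeriv_eq_fderiv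

lemma ContDiffAt.differentiableAt_lineDeriv {g : E → F} {x : E} (hg : ContDiffAt ℝ 2 g x)
    (v : E) : DifferentiableAt ℝ (fun y => lineDeriv ℝ g y v) x :=
  (((hg.fderiv_right (m := 1) le_rfl).differentiableAt one_ne_zero).clm_apply
    (differentiableAt_const v)).congr_of_eventuallyEq (hg.lineDeriv_eventuallyEq_fderiv v)

lemma ContDiffAt.lineDeriv_lineDeriv {g : E → F} {x : E} (hg : ContDiffAt ℝ 2 g x)
    (v w : E) :
    lineDeriv ℝ (fun y => lineDeriv ℝ g y w) x v = fderiv ℝ (fderiv ℝ g) x v w := by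
  have hD : DifferentiableAt ℝ (fderiv ℝ g) x :=
    (hg.fderiv_right (m := 1) le_rfl).differentiableAt one_ne_zero
  rw [(hg.lineDeriv_eventuallyEq_fderiv w).lineDeriv_eq,
    (hD.clm_apply (differentiableAt_const w)).lineDeriv_eq_fderiv,
    fderiv_clm_apply hD (differentiableAt_const w)]
  simp

lemma ContDiffAt.lineDeriv_lineDeriv_comm {g : E → F} {x : E} (hg : ContDiffAt ℝ 2 g x)
    (v w : E) :
    lineDeriv ℝ (fun y => lineDeriv ℝ g y w) x v
      = lineDeriv ℝ (fun y => lineDeriv ℝ g y v) x w := by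
  rw [hg.lineDeriv_lineDeriv, hg.lineDeriv_lineDeriv, hg.isSymmSndFDerivAt (by simp)]

end LineDeriv

lemma sum_sum_mul_eq_zero_of_symm_of_antisymm {ι R : Type*} [Fintype ι] [NonAssocRing R]
    [NoZeroDivisors R] [CharZero R] (S T : ι → ι → R) (hS : ∀ i j, S i j = S j i)
    (hT : ∀ i j, T i j = -T j i) : ∑ i, ∑ j, S i j * T i j = 0 := by
  rw [← CharZero.eq_neg_self_iff]
  calc ∑ i, ∑ j, S i j * T i j = ∑ j, ∑ i, S j i * -T j i := by
        rw [Finset.sum_comm]; simp only [hS, ← hT]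
    _ = -∑ i, ∑ j, S i j * T i j := by simp [Finset.sum_neg_distrib]

section PartialDerivatives

variable {n a b : ℕ}

lemma pdV_eq_lineDeriv (g : (Fin n → ℝ) → ℝ) (A : Fin n) (x : Fin n → ℝ) :
    pdV g A x = lineDeriv ℝ g x (Pi.single A 1) := by
  unfold pdV lineDeriv
  congr! 3 with t
  ext i
  by_cases h : i = A <;> simp [h]

lemma pdM_eq_lineDeriv (g : (Fin a → Fin b → ℝ) → ℝ) (i : Fin a) (j : Fin b)
    (m : Fin a → Fin b → ℝ) : pdM g i j m = lineDeriv ℝ g m (Pi.single i (Pi.single j 1)) := by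
  unfold pdM lineDeriv
  congr! 3 with t
  ext i' j'
  by_cases hi : i' = i <;> by_cases hj : j' = j <;> simp [hi, hj]

lemma DifferentiableAt.lineDeriv_eq_sum_pdM {g : (Fin a → Fin b → ℝ) → ℝ}
    {m : Fin a → Fin b → ℝ} (hg : DifferentiableAt ℝ g m) (w : Fin a → Fin b → ℝ) :
    lineDeriv ℝ g m w = ∑ i, ∑ j, w i j * pdM g i j m := by
  have hw : w = ∑ i, ∑ j, w i j • Pi.single i (Pi.single j 1) := by
    ext i j
    simp [Finset.sum_apply, Pi.single_apply, apply_ite (fun f : Fin b → ℝ => f j)]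
  simp only [pdM_eq_lineDeriv, hg.lineDeriv_eq_fderiv]
  conv_lhs => rw [hw]
  simp [map_sum]

lemma DifferentiableAt.lineDeriv_apply {E ι : Type*} {F : ι → Type*} [NormedAddCommGroup E]
    [NormedSpace ℝ E] [Fintype ι] [∀ i, NormedAddCommGroup (F i)] [∀ i, NormedSpace ℝ (F i)]
    {g : E → ∀ i, F i} {x : E} (hg : DifferentiableAt ℝ g x) (v : E) (i : ι) :
    lineDeriv ℝ g x v i = lineDeriv ℝ (fun y => g y i) x v := by
  have hi : HasLineDerivAt ℝ (fun y => g y i) (lineDeriv ℝ g x v i) x v :=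
    hasDerivAt_pi.1 (hg.lineDifferentiableAt.hasLineDerivAt) i
  exact hi.lineDeriv.symm

lemma pdV_comp_graph {G : (Fin n → ℝ) × (Fin a → Fin b → ℝ) → ℝ}
    {g : (Fin n → ℝ) → Fin a → Fin b → ℝ} {x : Fin n → ℝ}
    (hG : DifferentiableAt ℝ G (x, g x)) (hg : DifferentiableAt ℝ g x) (A : Fin n) :
    pdV (fun y => G (y, g y)) A x
      = pdV (fun y => G (y, g x)) A x
        + ∑ i, ∑ j, pdV (fun y => g y i j) A x * pdM (fun m => G (x, m)) i j (g x) := by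
  have hslice : DifferentiableAt ℝ (fun m => G (x, m)) (g x) :=
    hG.comp (g x) ((differentiableAt_const x).prodMk differentiableAt_id)
  simp only [pdV_eq_lineDeriv]
  rw [lineDeriv_comp_graph hG hg, hslice.lineDeriv_eq_sum_pdM]
  simp only [hg.lineDeriv_apply, (differentiableAt_pi.1 hg _).lineDeriv_apply]

lemma ContDiffAt.pdV_pdV_comm {g : (Fin n → ℝ) → ℝ} {x : Fin n → ℝ} (hg : ContDiffAt ℝ 2 g x)
    (A B : Fin n) : pdV (pdV g B) A x = pdV (pdV g A) B x := by
  rw [pdV_eq_lineDeriv, pdV_eq_lineDeriv, funext (pdV_eq_lineDeriv g A),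
    funext (pdV_eq_lineDeriv g B)]
  exact hg.lineDeriv_lineDeriv_comm _ _

lemma ContDiffAt.differentiableAt_pdV {g : (Fin n → ℝ) → ℝ} {x : Fin n → ℝ}
    (hg : ContDiffAt ℝ 2 g x) (A : Fin n) : DifferentiableAt ℝ (pdV g A) x := by
  rw [funext (pdV_eq_lineDeriv g A)]
  exact hg.differentiableAt_lineDeriv _

lemma ContDiffAt.differentiableAt_pdM_slice {E : Type*} [NormedAddCommGroup E] [NormedSpace ℝ E]
    {Φ : E × (Fin a → Fin b → ℝ) → ℝ} {q : E × (Fin a → Fin b → ℝ)} (hΦ : ContDiffAt ℝ 2 Φ q)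
    (i : Fin a) (j : Fin b) :
    DifferentiableAt ℝ
      (fun q : E × (Fin a → Fin b → ℝ) => pdM (fun m => Φ (q.1, m)) i j q.2) q := by
  simp only [pdM_eq_lineDeriv, lineDeriv_comp_prodMk_left]
  exact hΦ.differentiableAt_lineDeriv _

lemma ContDiffAt.differentiableAt_grad {n k : ℕ} {f : (Fin n → ℝ) → Fin k → ℝ} {x : Fin n → ℝ}
    (hf : ContDiffAt ℝ 2 f x) : DifferentiableAt ℝ (grad f) x :=
  differentiableAt_pi.2 fun A => differentiableAt_pi.2 fun K =>
    (contDiffAt_pi.1 hf K).differentiableAt_pdV A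

end PartialDerivatives

/-- If a C² dual Lagrangian `𝓛(x, p)` satisfies the fundamental
equations in `p` for each `x ∈ U`, then for every C² copath `f : U → ℝ^k` the total
divergence `Σ_A ∂/∂x^A [(∂𝓛/∂p_A^K)(x, Df(x))]` involves no second derivatives of
`f`: it equals `Σ_A (∂²𝓛/∂x^A∂p_A^K)(x, Df(x))`. -/
theorem statement_6 (n k : ℕ) (U : Set (Fin n → ℝ)) (hU : IsOpen U)
    (L : (Fin n → ℝ) → (Fin n → Fin k → ℝ) → ℝ)
    (hL : ContDiffOn ℝ 2
      (fun q : (Fin n → ℝ) × (Fin n → Fin k → ℝ) => L q.1 q.2)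
      (U ×ˢ (Set.univ : Set (Fin n → Fin k → ℝ))))
    (hfund : ∀ x ∈ U, FundEqs (L x))
    (f : (Fin n → ℝ) → (Fin k → ℝ)) (hf : ContDiffOn ℝ 2 f U) :
    ∀ (K : Fin k), ∀ x ∈ U,
      ∑ A, pdV (fun y => pdM (L y) A K (grad f y)) A x
        = ∑ A, pdV (fun y => pdM (L y) A K (grad f x)) A x := by
  intro K x hx
  have hL2 : ContDiffAt ℝ 2 (fun q : (Fin n → ℝ) × (Fin n → Fin k → ℝ) => L q.1 q.2)
      (x, grad f x) := hL.contDiffAt ((hU.prod isOpen_univ).mem_nhds ⟨hx, trivial⟩)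
  have hf2 : ContDiffAt ℝ 2 f x := hf.contDiffAt (hU.mem_nhds hx)
  have hchain (A : Fin n) :
      pdV (fun y => pdM (L y) A K (grad f y)) A x - pdV (fun y => pdM (L y) A K (grad f x)) A x
        = ∑ B, ∑ C, pdV (fun y => grad f y B C) A x * pdM (pdM (L x) A K) B C (grad f x) :=
    sub_eq_iff_eq_add'.2 <|
      pdV_comp_graph (hL2.differentiableAt_pdM_slice A K) hf2.differentiableAt_grad A
  have hhess (A B : Fin n) (C : Fin k) :
      pdV (fun y => grad f y B C) A x = pdV (fun y => grad f y A C) B x :=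
    (contDiffAt_pi.1 hf2 C).pdV_pdV_comm A B
  have hanti (A B : Fin n) (C : Fin k) :
      pdM (pdM (L x) A K) B C (grad f x) = -pdM (pdM (L x) B K) A C (grad f x) :=
    eq_neg_of_add_eq_zero_left (hfund x hx B A C K (grad f x))
  rw [← sub_eq_zero, ← Finset.sum_sub_distrib, Finset.sum_congr rfl fun A _ => hchain A]
  calc ∑ A, ∑ B, ∑ C, pdV (fun y => grad f y B C) A x * pdM (pdM (L x) A K) B C (grad f x)
      = ∑ C, ∑ A, ∑ B, pdV (fun y => grad f y B C) A x * pdM (pdM (L x) A K) B C (grad f x) :=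
        (Finset.sum_congr rfl fun _ _ => Finset.sum_comm).trans Finset.sum_comm
    _ = 0 := Finset.sum_eq_zero fun C _ => sum_sum_mul_eq_zero_of_symm_of_antisymm _ _
        (fun A B => hhess A B C) (fun A B => hanti A B C)
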